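/- Let p be a prime and let σ_j = Σ_{i=0}^{j} p^i. For every integer k ≥ 0 and every integer n with σ_k ≤ n < σ_{k+1}, λ_p(n) = p^k + λ_p(n − σ_k), with the convention λ_p(0) = 0. -/

import Mathlib

/-!
Write `λ` for `λ_p`. Two inequalities pin `λ` down.

*Upper bound.* Block-diagonal sums give `λ (a + b) ≤ λ a + λ b`, and the generator matrix of the
simplex code (one column for each of the `σ_k` points of `ℙᵏ(𝔽_p)`, every nonzero codeword of
weight `p ^ k`) gives `λ σ_k ≤ p ^ k`; hence `λ n ≤ p ^ k + λ (n - σ_k)` whenever `σ_k ≤ n`.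

*Lower bound.* Let `M` realise `λ n = w` and let `c` be a codeword of weight `w`. For any codeword
`v`, summing the weights of `v + t • c` over `t ∈ 𝔽_p` counts each column in the support of `c`
exactly `p - 1` times and each column outside it where `v` is nonzero `p` times. As each weight is
at most `w`, `v` has at most `w / p` nonzero entries outside the support of `c`; deleting that
support leaves `n - w` nonzero columns, so `p λ (n - λ n) ≤ λ n`.

The function `lambdaRec` defined by the recursion of the theorem meets the upper bound with
equality, and `lambdaRec n ≤ v` whenever `v ≤ n` and `p · lambdaRec (n - v) ≤ v`; so strong
induction gives `λ = lambdaRec`.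
-/

/-- The row space of a matrix over `ZMod p`: all linear combinations of its rows. -/
def rowSpace {p m n : ℕ} (M : Matrix (Fin m) (Fin n) (ZMod p)) :
    Submodule (ZMod p) (Fin n → ZMod p) :=
  Submodule.span (ZMod p) {v | ∃ i, v = M i}

/-- The capacity of a matrix: the maximal Hamming weight of a vector in its row space. -/
noncomputable def capacity {p m n : ℕ} (M : Matrix (Fin m) (Fin n) (ZMod p)) : ℕ :=
  sSup (hammingNorm '' (rowSpace M : Set (Fin n → ZMod p)))

/-- `lambdaP p n` is the minimum capacity over all matrices over `𝔽_p`
with `n` columns, none of which is a zero column.  (For `n = 0` this gives `0`.) -/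
noncomputable def lambdaP (p n : ℕ) : ℕ :=
  sInf {c | ∃ (m : ℕ) (M : Matrix (Fin m) (Fin n) (ZMod p)),
    (∀ j, ∃ i, M i j ≠ 0) ∧ c = capacity M}

/-- `sigmaP p k = 1 + p + ⋯ + p^k`. -/
def sigmaP (p k : ℕ) : ℕ := ∑ j ∈ Finset.range (k + 1), p ^ j

open Finset Matrix

section Sigma

variable (p : ℕ)

theorem sigmaP_succ (k : ℕ) : sigmaP p (k + 1) = sigmaP p k + p ^ (k + 1) :=
  sum_range_succ _ _

theorem sigmaP_succ' (k : ℕ) : sigmaP p (k + 1) = p * sigmaP p k + 1 := by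
  simp only [sigmaP, sum_range_succ' _ (k + 1), mul_sum, pow_succ', pow_zero]

@[simp] theorem sigmaP_zero : sigmaP p 0 = 1 := by simp [sigmaP]

theorem pow_le_sigmaP (k : ℕ) : p ^ k ≤ sigmaP p k := by
  rw [sigmaP, sum_range_succ]; omega

theorem sigmaP_mono : Monotone (sigmaP p) :=
  fun _ _ h => sum_le_sum_of_subset (range_subset_range.2 (by omega))

theorem one_le_sigmaP (k : ℕ) : 1 ≤ sigmaP p k := by
  simpa using sigmaP_mono p (Nat.zero_le k)

variable {p}

theorem lt_sigmaP (hp : 0 < p) (k : ℕ) : k < sigmaP p k := by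
  induction k with
  | zero => simp
  | succ k ih => have := Nat.one_le_pow (k + 1) p hp; rw [sigmaP_succ]; omega

end Sigma

/-- For `n ≥ 1`, the `k` with `σ_k ≤ n < σ_{k+1}`. -/
def sigmaIndex (p n : ℕ) : ℕ := Nat.findGreatest (fun k => sigmaP p k ≤ n) n

theorem sigmaIndex_spec {p n : ℕ} (hp : 0 < p) (hn : 0 < n) :
    sigmaP p (sigmaIndex p n) ≤ n ∧ n < sigmaP p (sigmaIndex p n + 1) := by
  refine ⟨Nat.findGreatest_spec (P := fun k => sigmaP p k ≤ n) (Nat.zero_le n) (by simpa), ?_⟩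
  by_contra! h
  have := lt_sigmaP hp (sigmaIndex p n + 1)
  exact Nat.findGreatest_is_greatest (P := fun k => sigmaP p k ≤ n) (n := n)
    (Nat.lt_succ_self _) (show sigmaIndex p n + 1 ≤ n by omega) h

theorem sigmaIndex_eq {p n k : ℕ} (hp : 0 < p) (h₁ : sigmaP p k ≤ n)
    (h₂ : n < sigmaP p (k + 1)) : sigmaIndex p n = k := by
  obtain ⟨h₃, h₄⟩ := sigmaIndex_spec hp (lt_of_lt_of_le (one_le_sigmaP p k) h₁)
  rcases lt_trichotomy (sigmaIndex p n) k with h | h | h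
  · have := sigmaP_mono p (show sigmaIndex p n + 1 ≤ k by omega); omega
  · exact h
  · have := sigmaP_mono p (show k + 1 ≤ sigmaIndex p n by omega); omega

theorem exists_sigmaP_le_lt {p n : ℕ} (hp : 0 < p) (hn : 0 < n) :
    ∃ k, sigmaP p k ≤ n ∧ n < sigmaP p (k + 1) :=
  ⟨_, sigmaIndex_spec hp hn⟩

def lambdaRec (p : ℕ) : ℕ → ℕ
  | 0 => 0
  | n + 1 => p ^ sigmaIndex p (n + 1) + lambdaRec p (n + 1 - sigmaP p (sigmaIndex p (n + 1)))
decreasing_by have := one_le_sigmaP p (sigmaIndex p (n + 1)); omega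

section lambdaRec

variable {p : ℕ}

@[simp] theorem lambdaRec_zero : lambdaRec p 0 = 0 := by simp [lambdaRec]

theorem lambdaRec_eq_pow_add (hp : 0 < p) {n k : ℕ} (h₁ : sigmaP p k ≤ n)
    (h₂ : n < sigmaP p (k + 1)) : lambdaRec p n = p ^ k + lambdaRec p (n - sigmaP p k) := by
  obtain ⟨n, rfl⟩ : ∃ m, n = m + 1 := ⟨n - 1, by have := one_le_sigmaP p k; omega⟩
  rw [lambdaRec, sigmaIndex_eq hp h₁ h₂]

theorem lambdaRec_le_self (hp : 0 < p) (n : ℕ) : lambdaRec p n ≤ n := by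
  induction n using Nat.strong_induction_on with
  | _ n ih =>
  rcases Nat.eq_zero_or_pos n with rfl | hn
  · simp
  obtain ⟨k, h₁, h₂⟩ := exists_sigmaP_le_lt hp hn
  have := one_le_sigmaP p k
  have := pow_le_sigmaP p k
  have := ih (n - sigmaP p k) (by omega)
  rw [lambdaRec_eq_pow_add hp h₁ h₂]
  omega

theorem lambdaRec_mul_sigmaP {c : ℕ} (hc : c ≤ p) (k : ℕ) :
    lambdaRec p (c * sigmaP p k) = c * p ^ k := by
  induction c with
  | zero => simp
  | succ c ih =>
    have h₁ : sigmaP p k ≤ (c + 1) * sigmaP p k := Nat.le_mul_of_pos_left _ c.succ_pos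
    have h₂ : (c + 1) * sigmaP p k < sigmaP p (k + 1) := by
      rw [sigmaP_succ']; exact Nat.lt_succ_of_le (Nat.mul_le_mul_right _ hc)
    rw [lambdaRec_eq_pow_add (by omega) h₁ h₂, Nat.succ_mul, Nat.add_sub_cancel, ih (by omega)]
    ring

theorem lambdaRec_mono (hp : 0 < p) : Monotone (lambdaRec p) := by
  refine monotone_nat_of_le_succ fun n => ?_
  induction n using Nat.strong_induction_on with
  | _ n ih =>
  obtain ⟨k, h₁, h₂⟩ := exists_sigmaP_le_lt hp n.succ_pos
  have := one_le_sigmaP p k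
  rw [lambdaRec_eq_pow_add hp h₁ h₂]
  rcases h₁.lt_or_eq with h₁ | h₁
  · rw [lambdaRec_eq_pow_add hp (k := k) (by omega) (by omega),
      show n + 1 - sigmaP p k = n - sigmaP p k + 1 by omega]
    exact Nat.add_le_add_left (ih _ (by omega)) _
  · -- `n + 1 = σ_k`, so `n = p σ_{k-1}` and both values equal `p ^ k`
    rcases k with _ | k
    · simp_all
    · have hn : n = p * sigmaP p k := by rw [sigmaP_succ'] at h₁; omega
      rw [show n + 1 - sigmaP p (k + 1) = 0 by omega, lambdaRec_zero, add_zero, hn,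
        lambdaRec_mul_sigmaP le_rfl, pow_succ']

theorem pow_le_lambdaRec (hp : 0 < p) {k m : ℕ} (h : sigmaP p k ≤ m) :
    p ^ k ≤ lambdaRec p m :=
  calc p ^ k = lambdaRec p (sigmaP p k) := by simpa using (lambdaRec_mul_sigmaP (c := 1) hp k).symm
    _ ≤ lambdaRec p m := lambdaRec_mono hp h

theorem lambdaRec_le_of_mul_sub_le (hp : 0 < p) {n v : ℕ} (hvn : v ≤ n)
    (h : p * lambdaRec p (n - v) ≤ v) : lambdaRec p n ≤ v := by
  induction n using Nat.strong_induction_on generalizing v with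
  | _ n ih =>
  rcases Nat.eq_zero_or_pos n with rfl | hn
  · simp
  obtain ⟨k, h₁, h₂⟩ := exists_sigmaP_le_lt hp hn
  by_cases hA : sigmaP p k ≤ n - v
  · calc lambdaRec p n ≤ lambdaRec p (p * sigmaP p k) :=
          lambdaRec_mono hp (by rw [sigmaP_succ'] at h₂; omega)
      _ = p * p ^ k := lambdaRec_mul_sigmaP le_rfl k
      _ ≤ p * lambdaRec p (n - v) := Nat.mul_le_mul_left p (pow_le_lambdaRec hp hA)
      _ ≤ v := h
  rw [lambdaRec_eq_pow_add hp h₁ h₂]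
  by_cases hC : n - v + p ^ k ≤ sigmaP p k
  · have := lambdaRec_le_self hp (n - sigmaP p k)
    omega
  -- now `σ_k - p ^ k < n - v < σ_k`: this forces `k = j + 1` and `σ_j < n - v < σ_{j+1}`
  obtain ⟨j, rfl⟩ : ∃ j, k = j + 1 := by
    rcases k with _ | j
    · simp at hA hC; omega
    · exact ⟨j, rfl⟩
  have hσ := sigmaP_succ p j
  rw [lambdaRec_eq_pow_add hp (n := n - v) (k := j) (by omega) (by omega), mul_add,
    ← pow_succ'] at h
  have := ih (n - sigmaP p (j + 1)) (by omega) (v := v - p ^ (j + 1)) (by omega)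
    (by rw [show n - sigmaP p (j + 1) - (v - p ^ (j + 1)) = n - v - sigmaP p j by omega]; omega)
  omega

end lambdaRec

theorem hammingNorm_sumElim {α β M : Type*} [Fintype α] [Fintype β] [Zero M] [DecidableEq M]
    (v : α → M) (w : β → M) : hammingNorm (Sum.elim v w) = hammingNorm v + hammingNorm w := by
  simp only [hammingNorm, ← Fintype.card_subtype]
  rw [← Fintype.card_sum]
  exact Fintype.card_congr (Equiv.subtypeSum.trans (Equiv.sumCongr
    (Equiv.subtypeEquivRight fun a => by simp) (Equiv.subtypeEquivRight fun b => by simp)))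

theorem hammingNorm_comp_equiv {α β M : Type*} [Fintype α] [Fintype β] [Zero M] [DecidableEq M]
    (v : α → M) (e : β ≃ α) : hammingNorm (v ∘ e) = hammingNorm v := by
  simp only [hammingNorm, ← Fintype.card_subtype]
  exact Fintype.card_congr (e.subtypeEquiv fun _ => Iff.rfl)

theorem hammingNorm_comp_subtypeVal {α M : Type*} [Fintype α] [Zero M] [DecidableEq M]
    (P : α → Prop) [DecidablePred P] (v : α → M) :
    hammingNorm (v ∘ (Subtype.val : {a // P a} → α)) = #{a | P a ∧ v a ≠ 0} := by
  simp only [hammingNorm, ← Fintype.card_subtype]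
  exact Fintype.card_congr (Equiv.subtypeSubtypeEquivSubtypeInter P (v · ≠ 0))

section FiniteField

variable {K : Type*} [Field K] [Fintype K] [DecidableEq K]

theorem card_filter_add_mul_ne_zero (a : K) {b : K} (hb : b ≠ 0) :
    #{t : K | a + t * b ≠ 0} = Fintype.card K - 1 := by
  have e : {t : K // a + t * b ≠ 0} ≃ {s : K // s ≠ 0} :=
    ((Equiv.mulRight₀ b hb).trans (Equiv.addLeft a)).subtypeEquiv fun t => by simp
  rw [← Fintype.card_subtype, Fintype.card_congr e, Fintype.card_subtype_compl,
    Fintype.card_subtype_eq]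

variable {ι : Type*} [Fintype ι]

theorem sum_hammingNorm_add_smul (v c : ι → K) :
    ∑ t : K, hammingNorm (v + t • c) =
      (Fintype.card K - 1) * hammingNorm c + Fintype.card K * #{j | c j = 0 ∧ v j ≠ 0} := by
  have hcol (j : ι) : #{t : K | v j + t * c j ≠ 0} =
      (if c j ≠ 0 then Fintype.card K - 1 else 0) +
        if c j = 0 ∧ v j ≠ 0 then Fintype.card K else 0 := by
    by_cases hc : c j = 0
    · by_cases hv : v j = 0 <;> simp [hc, hv]
    · simp [hc, card_filter_add_mul_ne_zero]
  calc ∑ t : K, hammingNorm (v + t • c) = ∑ j, #{t : K | v j + t * c j ≠ 0} := by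
        simp only [hammingNorm, card_filter, Pi.add_apply, Pi.smul_apply, smul_eq_mul]
        exact sum_comm
    _ = _ := by
        simp only [hcol, sum_add_distrib, ← sum_filter, sum_const, smul_eq_mul, hammingNorm]
        ring

theorem card_mul_card_filter_le_hammingNorm (v c : ι → K)
    (h : ∀ t : K, hammingNorm (v + t • c) ≤ hammingNorm c) :
    Fintype.card K * #{j | c j = 0 ∧ v j ≠ 0} ≤ hammingNorm c := by
  have hsum : ∑ t : K, hammingNorm (v + t • c) ≤ Fintype.card K * hammingNorm c := by
    simpa using sum_le_sum fun t (_ : t ∈ univ) => h t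
  rw [sum_hammingNorm_add_smul] at hsum
  obtain ⟨q, hq⟩ : ∃ q, Fintype.card K = q + 1 :=
    ⟨_, (Nat.succ_pred_eq_of_pos Fintype.card_pos).symm⟩
  rw [hq] at hsum ⊢
  rw [Nat.add_sub_cancel] at hsum
  nlinarith

theorem card_mul_card_dotProduct_add_eq_zero [DecidableEq ι] {y : ι → K} (hy : y ≠ 0)
    (t : K) :
    Fintype.card K * #{u : ι → K | y ⬝ᵥ u + t = 0} = Fintype.card K ^ Fintype.card ι := by
  obtain ⟨i, hi⟩ := Function.ne_iff.1 hy
  -- translating by a multiple of `Pi.single i 1` moves each level set of `u ↦ y ⬝ᵥ u + t`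
  -- onto any other
  have hfiber (s : K) : #{u : ι → K | y ⬝ᵥ u + t = s} = #{u : ι → K | y ⬝ᵥ u + t = 0} := by
    simp only [← Fintype.card_subtype]
    refine Fintype.card_congr ((Equiv.addRight (Pi.single i (-s / y i))).subtypeEquiv fun u => ?_)
    simp only [Equiv.coe_addRight, dotProduct_add, dotProduct_single, Pi.zero_apply] at *
    rw [mul_div_cancel₀ _ (by simpa using hi)]
    constructor <;> intro h <;> linear_combination h
  calc Fintype.card K * #{u : ι → K | y ⬝ᵥ u + t = 0}
      = ∑ s : K, #{u : ι → K | y ⬝ᵥ u + t = s} := by simp [hfiber]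
    _ = Fintype.card (ι → K) := (card_eq_sum_card_fiberwise fun u _ => mem_univ _).symm
    _ = Fintype.card K ^ Fintype.card ι := Fintype.card_fun

end FiniteField

universe u

theorem exists_simplex_matrix {K : Type u} [Field K] [Fintype K] [DecidableEq K] (k : ℕ) :
    ∃ (ι : Type u) (_ : Fintype ι) (A : Matrix (Fin (k + 1)) ι K),
      Fintype.card ι = sigmaP (Fintype.card K) k ∧ (∀ j, ∃ i, A i j ≠ 0) ∧
        ∀ x, hammingNorm (x ᵥ* A) ≤ Fintype.card K ^ k := by
  induction k with
  | zero =>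
    refine ⟨PUnit, inferInstance, fun _ _ => 1, by simp, fun _ => ⟨0, one_ne_zero⟩, fun x => ?_⟩
    rw [pow_zero]
    exact hammingNorm_le_card_fintype.trans_eq Fintype.card_unique
  | succ k ih =>
    obtain ⟨ι, _, A, hcard, hcols, hwt⟩ := ih
    -- the new columns are the vectors `(u, 1)`, the old ones are extended by `0`
    let B : Matrix (Fin (k + 2)) (ι ⊕ (Fin (k + 1) → K)) K :=
      Fin.snoc (α := fun _ => _ → K) (fun i => Sum.elim (A i) fun u => u i) (Sum.elim 0 1)
    have hB (x : Fin (k + 2) → K) :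
        x ᵥ* B = Sum.elim (Fin.init x ᵥ* A) fun u => Fin.init x ⬝ᵥ u + x (Fin.last _) := by
      ext (j | u) <;> simp [B, vecMul, dotProduct, Fin.sum_univ_castSucc, Fin.init, mul_comm]
    refine ⟨_, inferInstance, B, ?_, ?_, fun x => ?_⟩
    · simp [hcard, sigmaP_succ]
    · rintro (j | u)
      · obtain ⟨i, hi⟩ := hcols j
        exact ⟨i.castSucc, by simpa [B] using hi⟩
      · exact ⟨Fin.last _, by simp [B]⟩
    rw [hB, hammingNorm_sumElim]
    by_cases hy : Fin.init x = 0
    · simpa [hy] using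
        hammingNorm_le_card_fintype (x := fun u : Fin (k + 1) → K => x (Fin.last _))
    · have hzero : #{u : Fin (k + 1) → K | Fin.init x ⬝ᵥ u + x (Fin.last _) = 0} =
          Fintype.card K ^ k := by
        have := card_mul_card_dotProduct_add_eq_zero hy (x (Fin.last _))
        rw [Fintype.card_fin, pow_succ'] at this
        exact Nat.eq_of_mul_eq_mul_left Fintype.card_pos this
      have hsplit : Fintype.card K ^ k +
          hammingNorm (fun u : Fin (k + 1) → K => Fin.init x ⬝ᵥ u + x (Fin.last _)) =
            Fintype.card K ^ (k + 1) := by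
        rw [← hzero, hammingNorm, card_filter_add_card_filter_not, card_univ, Fintype.card_fun,
          Fintype.card_fin]
      have := hwt (Fin.init x)
      have := Nat.pow_le_pow_right (Fintype.card_pos (α := K)) k.le_succ
      omega

section Capacity

variable {p m n : ℕ}

theorem capacity_eq_iSup (M : Matrix (Fin m) (Fin n) (ZMod p)) :
    capacity M = ⨆ x, hammingNorm (x ᵥ* M) := by
  have : (rowSpace M : Set (Fin n → ZMod p)) = Set.range (· ᵥ* M) := by
    rw [rowSpace, show {v | ∃ i, v = M i} = Set.range M.row from
      Set.ext fun _ => exists_congr fun _ => eq_comm,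
      ← range_vecMulLinear]
    rfl
  rw [capacity, this, ← Set.range_comp, iSup]
  rfl

theorem capacity_le {M : Matrix (Fin m) (Fin n) (ZMod p)} {c : ℕ}
    (h : ∀ x, hammingNorm (x ᵥ* M) ≤ c) : capacity M ≤ c :=
  capacity_eq_iSup M ▸ ciSup_le h

variable [NeZero p]

theorem hammingNorm_vecMul_le_capacity (M : Matrix (Fin m) (Fin n) (ZMod p))
    (x : Fin m → ZMod p) : hammingNorm (x ᵥ* M) ≤ capacity M :=
  capacity_eq_iSup M ▸
    le_ciSup (f := fun x => hammingNorm (x ᵥ* M)) (Set.finite_range _).bddAbove x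

theorem exists_hammingNorm_vecMul_eq_capacity (M : Matrix (Fin m) (Fin n) (ZMod p)) :
    ∃ x, hammingNorm (x ᵥ* M) = capacity M :=
  capacity_eq_iSup M ▸ exists_eq_ciSup_of_finite

end Capacity

section Lambda

variable {p : ℕ}

theorem lambdaP_le_capacity {m n : ℕ} (M : Matrix (Fin m) (Fin n) (ZMod p))
    (hM : ∀ j, ∃ i, M i j ≠ 0) : lambdaP p n ≤ capacity M :=
  Nat.sInf_le ⟨m, M, hM, rfl⟩

theorem lambdaP_card_le {κ ι : Type*} [Fintype κ] [Fintype ι] (M : Matrix κ ι (ZMod p))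
    (hM : ∀ j, ∃ i, M i j ≠ 0) {c : ℕ} (hc : ∀ x, hammingNorm (x ᵥ* M) ≤ c) :
    lambdaP p (Fintype.card ι) ≤ c := by
  let eκ := Fintype.equivFin κ
  let eι := Fintype.equivFin ι
  refine (lambdaP_le_capacity (M.submatrix eκ.symm eι.symm) fun j => ?_).trans
    (capacity_le fun x => ?_)
  · obtain ⟨i, hi⟩ := hM (eι.symm j)
    exact ⟨eκ i, by simpa using hi⟩
  · rw [submatrix_vecMul_equiv, hammingNorm_comp_equiv]
    exact hc _

variable [Fact (1 < p)]

theorem exists_capacity_eq_lambdaP (n : ℕ) : ∃ (m : ℕ) (M : Matrix (Fin m) (Fin n) (ZMod p)),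
    (∀ j, ∃ i, M i j ≠ 0) ∧ capacity M = lambdaP p n := by
  obtain ⟨m, M, hM, h⟩ := Nat.sInf_mem
    (s := {c | ∃ (m : ℕ) (M : Matrix (Fin m) (Fin n) (ZMod p)),
      (∀ j, ∃ i, M i j ≠ 0) ∧ c = capacity M})
    ⟨_, 1, fun _ _ => 1, fun _ => ⟨0, one_ne_zero⟩, rfl⟩
  exact ⟨m, M, hM, h.symm⟩

theorem lambdaP_le_self (n : ℕ) : lambdaP p n ≤ n := by
  simpa using lambdaP_card_le (fun (_ : Fin 1) (_ : Fin n) => (1 : ZMod p))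
    (fun _ => ⟨0, one_ne_zero⟩) fun _ => hammingNorm_le_card_fintype

theorem lambdaP_pos {n : ℕ} (hn : 0 < n) : 0 < lambdaP p n := by
  obtain ⟨m, M, hM, hcap⟩ := exists_capacity_eq_lambdaP (p := p) n
  obtain ⟨i, hi⟩ := hM ⟨0, hn⟩
  have hrow : 0 < hammingNorm (M i) := hammingNorm_pos_iff.2 fun h => hi (by simp [h])
  have := hammingNorm_vecMul_le_capacity M (Pi.single i 1)
  rw [single_vecMul, one_smul] at this
  exact hcap ▸ hrow.trans_le this

theorem lambdaP_add_le (a b : ℕ) : lambdaP p (a + b) ≤ lambdaP p a + lambdaP p b := by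
  obtain ⟨_, A, hA, hcapA⟩ := exists_capacity_eq_lambdaP (p := p) a
  obtain ⟨_, B, hB, hcapB⟩ := exists_capacity_eq_lambdaP (p := p) b
  have hcols : ∀ j, ∃ i, fromBlocks A 0 0 B i j ≠ 0 := by
    rintro (j | j)
    · obtain ⟨i, hi⟩ := hA j
      exact ⟨.inl i, hi⟩
    · obtain ⟨i, hi⟩ := hB j
      exact ⟨.inr i, hi⟩
  rw [← hcapA, ← hcapB]
  simpa using lambdaP_card_le _ hcols fun x => by
    simpa [vecMul_fromBlocks, hammingNorm_sumElim] using
      add_le_add (hammingNorm_vecMul_le_capacity A _) (hammingNorm_vecMul_le_capacity B _)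

end Lambda

section Prime

variable {p : ℕ} [hp : Fact p.Prime]

theorem lambdaP_sigmaP_le (k : ℕ) : lambdaP p (sigmaP p k) ≤ p ^ k := by
  obtain ⟨ι, _, A, hcard, hA, hwt⟩ := exists_simplex_matrix (K := ZMod p) k
  rw [ZMod.card] at hcard hwt
  exact hcard ▸ lambdaP_card_le A hA hwt

theorem lambdaP_le_pow_add {n k : ℕ} (h : sigmaP p k ≤ n) :
    lambdaP p n ≤ p ^ k + lambdaP p (n - sigmaP p k) :=
  calc lambdaP p n = lambdaP p (sigmaP p k + (n - sigmaP p k)) := by rw [Nat.add_sub_cancel' h]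
    _ ≤ lambdaP p (sigmaP p k) + lambdaP p (n - sigmaP p k) := lambdaP_add_le _ _
    _ ≤ p ^ k + lambdaP p (n - sigmaP p k) := by grw [lambdaP_sigmaP_le]

theorem mul_lambdaP_sub_capacity_le {m n : ℕ} (M : Matrix (Fin m) (Fin n) (ZMod p))
    (hM : ∀ j, ∃ i, M i j ≠ 0) : p * lambdaP p (n - capacity M) ≤ capacity M := by
  obtain ⟨x₀, hx₀⟩ := exists_hammingNorm_vecMul_eq_capacity M
  set c := x₀ ᵥ* M
  have hcard : Fintype.card {j // c j = 0} = n - capacity M := by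
    have := card_filter_add_card_filter_not (s := univ) (c · = 0)
    rw [card_univ, Fintype.card_fin] at this
    rw [Fintype.card_subtype, ← hx₀]
    exact Nat.eq_sub_of_add_eq this
  rw [← hcard, mul_comm, ← Nat.le_div_iff_mul_le hp.out.pos]
  refine lambdaP_card_le (M.submatrix id Subtype.val) (fun j => hM j.1) fun x => ?_
  have hmax (t : ZMod p) : hammingNorm (x ᵥ* M + t • c) ≤ hammingNorm c := by
    rw [hx₀, ← smul_vecMul, ← add_vecMul]
    exact hammingNorm_vecMul_le_capacity M _
  have := card_mul_card_filter_le_hammingNorm _ _ hmax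
  rw [ZMod.card, hx₀] at this
  rw [Nat.le_div_iff_mul_le hp.out.pos, mul_comm]
  exact (hammingNorm_comp_subtypeVal (c · = 0) (x ᵥ* M)).symm ▸ this

theorem mul_lambdaP_sub_lambdaP_le (n : ℕ) : p * lambdaP p (n - lambdaP p n) ≤ lambdaP p n := by
  obtain ⟨m, M, hM, hcap⟩ := exists_capacity_eq_lambdaP (p := p) n
  exact hcap ▸ mul_lambdaP_sub_capacity_le M hM

theorem lambdaP_eq_lambdaRec (n : ℕ) : lambdaP p n = lambdaRec p n := by
  induction n using Nat.strong_induction_on with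
  | _ n ih =>
  rcases Nat.eq_zero_or_pos n with rfl | hn
  · simpa using lambdaP_le_self (p := p) 0
  obtain ⟨k, h₁, h₂⟩ := exists_sigmaP_le_lt hp.out.pos hn
  apply le_antisymm
  · calc lambdaP p n ≤ p ^ k + lambdaP p (n - sigmaP p k) := lambdaP_le_pow_add h₁
      _ = lambdaRec p n := by
        rw [ih _ (by have := one_le_sigmaP p k; omega), lambdaRec_eq_pow_add hp.out.pos h₁ h₂]
  · refine lambdaRec_le_of_mul_sub_le hp.out.pos (lambdaP_le_self n) ?_
    rw [← ih _ (by have := lambdaP_pos (p := p) hn; omega)]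
    exact mul_lambdaP_sub_lambdaP_le n

end Prime

theorem statement8 (p : ℕ) (hp : p.Prime) (k n : ℕ)
    (h1 : sigmaP p k ≤ n) (h2 : n < sigmaP p (k + 1)) :
    lambdaP p n = p ^ k + lambdaP p (n - sigmaP p k) := by
  have := Fact.mk hp
  rw [lambdaP_eq_lambdaRec, lambdaP_eq_lambdaRec, lambdaRec_eq_pow_add hp.pos h1 h2]
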